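/- For the Fibonacci and Lucas numbers and every natural number n ≥ 1, Σ_{i=0}^{n} Fib(i)²·Luc(n−i)·Fib(n−i) = Fib(n)·( (n−1)·Fib(n+1) + (n+1)·Fib(n−1) ) / 5. -/

import Mathlib

/-!
The sequence `g j = L_j F_j` (which is `F_{2j}`) satisfies `g (j + 2) = 3 g (j + 1) - g j` with
`g 0 = 0`, `g 1 = 1`, so its convolution `S n = ∑ F_i² g (n - i)` with `F_i²` satisfies
`S (n + 2) = 3 S (n + 1) - S n + F_{n+1}²`. The closed form obeys the same recurrence, which
after expanding everything in `F_n, F_{n+1}` is a polynomial identity.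
-/

noncomputable def fibR : ℕ → ℝ
  | 0 => 0
  | 1 => 1
  | n + 2 => fibR (n + 1) + fibR n

noncomputable def lucR : ℕ → ℝ
  | 0 => 2
  | 1 => 1
  | n + 2 => lucR (n + 1) + lucR n

open Finset

theorem sum_range_mul_sub_of_recurrence {R : Type*} [CommRing R] (a g : ℕ → R) (p q : R)
    (hg : ∀ j, g (j + 2) = p * g (j + 1) + q * g j) (n : ℕ) :
    ∑ i ∈ range (n + 3), a i * g (n + 2 - i) =
      p * ∑ i ∈ range (n + 2), a i * g (n + 1 - i) + q * ∑ i ∈ range (n + 1), a i * g (n - i)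
        + a (n + 1) * (g 1 - p * g 0) + a (n + 2) * g 0 := by
  simp only [← Nat.sum_antidiagonal_eq_sum_range_succ fun i j => a i * g j,
    Nat.sum_antidiagonal_succ', hg, mul_add, sum_add_distrib, ← mul_sum, mul_left_comm _ p,
    mul_left_comm _ q]
  ring

theorem fibR_add_two (n : ℕ) : fibR (n + 2) = fibR (n + 1) + fibR n := rfl

theorem lucR_eq (n : ℕ) : lucR n = 2 * fibR (n + 1) - fibR n := by
  induction n using Nat.twoStepInduction with
  | zero => norm_num [lucR, fibR]
  | one => norm_num [lucR, fibR]
  | more n ih0 ih1 =>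
    rw [lucR, ih0, ih1, fibR_add_two (n + 1), fibR_add_two n]
    ring

theorem lucR_mul_fibR_add_two (n : ℕ) :
    lucR (n + 2) * fibR (n + 2) = 3 * (lucR (n + 1) * fibR (n + 1)) - lucR n * fibR n := by
  simp only [lucR_eq, fibR_add_two]
  ring

theorem sum_fibR_sq_mul_lucR_mul_fibR_succ (m : ℕ) :
    ∑ i ∈ range (m + 2), fibR i ^ 2 * (lucR (m + 1 - i) * fibR (m + 1 - i)) =
      fibR (m + 1) * (m * fibR (m + 2) + (m + 2) * fibR m) / 5 := by
  induction m using Nat.twoStepInduction with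
  | zero => simp [sum_range_succ, fibR]
  | one => norm_num [sum_range_succ, fibR, lucR]
  | more m ih0 ih1 =>
    have hg (j : ℕ) : lucR (j + 2) * fibR (j + 2) =
        3 * (lucR (j + 1) * fibR (j + 1)) + -1 * (lucR j * fibR j) := by
      rw [lucR_mul_fibR_add_two]
      ring
    rw [sum_range_mul_sub_of_recurrence (fun i => fibR i ^ 2) (fun j => lucR j * fibR j)
      3 (-1) hg (m + 1), ih1, ih0]
    simp only [fibR, lucR]
    push_cast
    ring

theorem fib_luc_product_convolution_general (n : ℕ) :
    ∑ i ∈ Finset.range (n + 1), fibR i ^ 2 * lucR (n - i) * fibR (n - i) =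
      fibR n * (((n : ℝ) - 1) * fibR (n + 1) + ((n : ℝ) + 1) * fibR (n - 1)) / 5 := by
  cases n with
  | zero => simp [fibR]
  | succ m =>
    simp only [mul_assoc (fibR _ ^ 2), sum_fibR_sq_mul_lucR_mul_fibR_succ, Nat.add_sub_cancel]
    push_cast
    ring

theorem fib_luc_product_convolution (n : ℕ) (hn : 1 ≤ n) :
    ∑ i ∈ Finset.range (n + 1), fibR i ^ 2 * lucR (n - i) * fibR (n - i) =
      fibR n * (((n : ℝ) - 1) * fibR (n + 1) + ((n : ℝ) + 1) * fibR (n - 1)) / 5 :=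
  fib_luc_product_convolution_general n
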